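/- arXiv:2101.11120 — 3 statements merged into one kernel-verified Lean document; each statement's English description precedes it below -/
import Mathlib

section
/- Let K be a number field and let ζ ∈ K be a nonzero element such that for every place σ of K one has e^{-ε} < |ζ|_σ < e^{ε} for some sufficiently small ε > 0 (depending only on K), and |ζ|_σ = 1 for all but finitely many σ. Then ζ is a root of unity. -/
/-!
At a finite place `v` the absolute value of `ζ` is an integral power of the norm of `v`, which is
at least `2`; so once `e^ε ≤ 2`, both `ζ` and `ζ⁻¹` are integral at every prime and `ζ` is a unit
of `𝓞 K`. The logarithmic embedding of that unit then lies in a small ball around `0`, and since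
the unit lattice is discrete it is `0`, i.e. `ζ` is torsion.
-/

open IsDedekindDomain NumberField

/-- The normalized absolute value at a finite place `v` of a number field `K`. -/
noncomputable def finPlaceAbs (K : Type*) [Field K] [NumberField K]
    (v : HeightOneSpectrum (𝓞 K)) (x : K) : ℝ :=
  if h : (Nat.card (𝓞 K ⧸ v.asIdeal) : NNReal) = 0 then 0
  else (WithZeroMulInt.toNNReal h (v.valuation K x) : ℝ)

open NumberField.InfinitePlace NumberField.Units NumberField.Units.dirichletUnitTheorem

theorem finPlaceAbs_eq_adicAbv (K : Type*) [Field K] [NumberField K]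
    (v : HeightOneSpectrum (𝓞 K)) (x : K) :
    finPlaceAbs K v x = NumberField.HeightOneSpectrum.adicAbv K v x := by
  have hcard : Nat.card (𝓞 K ⧸ v.asIdeal) = Ideal.absNorm v.asIdeal := by
    rw [Ideal.absNorm_apply, Submodule.cardQuot_apply]
  rw [finPlaceAbs, dif_neg (hcard ▸ NumberField.HeightOneSpectrum.absNorm_ne_zero v),
    NumberField.HeightOneSpectrum.adicAbv_def]
  congr 3

theorem finPlaceAbs_inv (K : Type*) [Field K] [NumberField K]
    (v : HeightOneSpectrum (𝓞 K)) (x : K) :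
    finPlaceAbs K v x⁻¹ = (finPlaceAbs K v x)⁻¹ := by
  simp only [finPlaceAbs_eq_adicAbv, map_inv₀]

theorem valuation_le_one_of_adicAbv_lt_absNorm {K : Type*} [Field K] [NumberField K]
    {v : HeightOneSpectrum (𝓞 K)} {x : K}
    (h : NumberField.HeightOneSpectrum.adicAbv K v x < Ideal.absNorm v.asIdeal) :
    v.valuation K x ≤ 1 := by
  by_contra! hv
  have hx : v.valuation K x ≠ 0 := (zero_lt_one.trans hv).ne'
  have hlog : 1 ≤ WithZero.log (v.valuation K x) := by
    rw [← WithZero.exp_log hx, ← WithZero.exp_zero, WithZero.exp_lt_exp] at hv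
    omega
  have hN : (1 : ℝ) ≤ Ideal.absNorm v.asIdeal :=
    mod_cast (NumberField.HeightOneSpectrum.one_lt_absNorm v).le
  rw [NumberField.HeightOneSpectrum.adicAbv_def, WithZeroMulInt.toNNReal_neg_apply _ hx,
    WithZero.toAdd_unzero_eq_log] at h
  push_cast at h
  exact h.not_ge <| by simpa only [zpow_one] using zpow_le_zpow_right₀ hN hlog

theorem valuation_le_one_of_finPlaceAbs_lt_two {K : Type*} [Field K] [NumberField K]
    {v : HeightOneSpectrum (𝓞 K)} {x : K} (h : finPlaceAbs K v x < 2) :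
    v.valuation K x ≤ 1 := by
  refine valuation_le_one_of_adicAbv_lt_absNorm ?_
  have : (2 : ℝ) ≤ Ideal.absNorm v.asIdeal :=
    mod_cast NumberField.HeightOneSpectrum.one_lt_absNorm v
  rw [← finPlaceAbs_eq_adicAbv]
  linarith

theorem exists_unit_algebraMap_eq {R K : Type*} [CommRing R] [IsDedekindDomain R] [Field K]
    [Algebra R K] [IsFractionRing R K] {x : K} (hx0 : x ≠ 0)
    (hx : ∀ v : HeightOneSpectrum R, v.valuation K x ≤ 1)
    (hx' : ∀ v : HeightOneSpectrum R, v.valuation K x⁻¹ ≤ 1) :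
    ∃ u : Rˣ, algebraMap R K u = x := by
  obtain ⟨a, ha⟩ := HeightOneSpectrum.mem_integers_of_valuation_le_one K x hx
  obtain ⟨b, hb⟩ := HeightOneSpectrum.mem_integers_of_valuation_le_one K x⁻¹ hx'
  have hab : a * b = 1 := IsFractionRing.injective R K <| by
    rw [map_mul, ha, hb, map_one, mul_inv_cancel₀ hx0]
  exact ⟨⟨a, b, hab, mul_comm b a ▸ hab⟩, ha⟩

theorem exists_pos_forall_abs_log_lt_mem_torsion (K : Type*) [Field K] [NumberField K] :
    ∃ r > 0, ∀ u : (𝓞 K)ˣ, (∀ w : InfinitePlace K, |Real.log (w u)| < r) → u ∈ torsion K := by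
  classical
  obtain ⟨r, hr, hball⟩ :=
    Metric.isOpen_iff.mp (isOpen_discrete ({0} : Set (unitLattice K))) 0 rfl
  refine ⟨r / 2, by positivity, fun u hu => logEmbedding_eq_zero_iff.mp ?_⟩
  have hnorm : ‖logEmbedding K (Additive.ofMul u)‖ < r := by
    rw [pi_norm_lt_iff hr]
    intro w
    rw [logEmbedding_component, Real.norm_eq_abs, abs_mul, Nat.abs_cast]
    calc (mult w.val : ℝ) * |Real.log (w.val u)| ≤ 2 * |Real.log (w.val u)| := by
          gcongr; rw [mult]; split_ifs <;> norm_num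
      _ < 2 * (r / 2) := by gcongr; exact hu w.val
      _ = r := by ring
  have h_mem := hball (a := ⟨_, Additive.ofMul u, trivial, rfl⟩) (by simpa using hnorm)
  simpa using h_mem

/-- There is an `ε > 0`, depending only on the number field `K`, such that any nonzero
`ζ ∈ K` all of whose absolute values (at all infinite and finite places) lie strictly
between `e^{-ε}` and `e^{ε}`, and whose absolute value equals `1` at all but finitely
many places, is a root of unity. -/
theorem stmt_2 (K : Type*) [Field K] [NumberField K] :
    ∃ ε : ℝ, 0 < ε ∧ ∀ ζ : K, ζ ≠ 0 →
      (∀ w : InfinitePlace K, Real.exp (-ε) < w ζ ∧ w ζ < Real.exp ε) →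
      (∀ v : HeightOneSpectrum (𝓞 K),
        Real.exp (-ε) < finPlaceAbs K v ζ ∧ finPlaceAbs K v ζ < Real.exp ε) →
      {v : HeightOneSpectrum (𝓞 K) | finPlaceAbs K v ζ ≠ 1}.Finite →
      ∃ n : ℕ, 0 < n ∧ ζ ^ n = 1 := by
  obtain ⟨r, hr, h_torsion⟩ := exists_pos_forall_abs_log_lt_mem_torsion K
  set ε := min r (Real.log 2)
  have hε : 0 < ε := lt_min hr (Real.log_pos one_lt_two)
  have hexp : Real.exp ε ≤ 2 :=
    (Real.exp_le_exp.mpr (min_le_right _ _)).trans (Real.exp_log two_pos).le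
  refine ⟨ε, hε, fun ζ hζ h_inf h_fin _ => ?_⟩
  have hζ_int : ∀ v : HeightOneSpectrum (𝓞 K), v.valuation K ζ ≤ 1 := fun v =>
    valuation_le_one_of_finPlaceAbs_lt_two ((h_fin v).2.trans_le hexp)
  have hζ_inv_int : ∀ v : HeightOneSpectrum (𝓞 K), v.valuation K ζ⁻¹ ≤ 1 := fun v => by
    refine valuation_le_one_of_finPlaceAbs_lt_two ?_
    rw [finPlaceAbs_inv]
    refine (inv_lt_of_inv_lt₀ (Real.exp_pos ε) ?_).trans_le hexp
    simpa only [Real.exp_neg] using (h_fin v).1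
  have hζ_log : ∀ w : InfinitePlace K, |Real.log (w ζ)| < ε := fun w => by
    have hpos : 0 < w ζ := w.pos_iff.mpr hζ
    exact abs_lt.mpr ⟨(Real.lt_log_iff_exp_lt hpos).mpr (h_inf w).1,
      (Real.log_lt_iff_lt_exp hpos).mpr (h_inf w).2⟩
  obtain ⟨u, rfl⟩ := exists_unit_algebraMap_eq hζ hζ_int hζ_inv_int
  have hu : u ∈ torsion K := h_torsion u fun w => (hζ_log w).trans_le (min_le_left _ _)
  obtain ⟨n, hn, hun⟩ := isOfFinOrder_iff_pow_eq_one.mp hu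
  exact ⟨n, hn, by simpa using congrArg (fun u : (𝓞 K)ˣ => algebraMap (𝓞 K) K u) hun⟩
end

section
/- Let α_uni : Z^d → GL_m(Q) be a homomorphism whose image consists of unipotent matrices, and suppose a subspace V ⊆ Q^m is invariant under α_uni(n) for all n in some finite-index subgroup Λ ≤ Z^d. Then V is invariant under α_uni(n) for all n ∈ Z^d. -/
/-!
Let `g = α n` and `N = [ℤ^d : Λ]`, so that `g ^ N = α (N • n)` preserves `V`. As `g - 1` is
nilpotent and `N` is invertible in `ℚ`, the polynomial `X ^ N - g ^ N` has a unique root congruent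
to `1` modulo nilpotents (Hensel/Newton). Newton's iteration from `1` runs inside the commutative
algebra `ℚ[g ^ N]` and produces such a root there, so `g ∈ ℚ[g ^ N]`: `g` is a polynomial in
`g ^ N` and therefore preserves `V` as well.
-/

open Polynomial

namespace Polynomial

variable {R S : Type*} [CommRing R] [CommRing S] [Algebra R S]

theorem mem_range_algebraMap_of_aeval_eq_zero {P : R[X]} {x : R}
    (hP : IsNilpotent (aeval x P)) (hP' : IsUnit (aeval x (derivative P)))
    {s : S} (hs : IsNilpotent (algebraMap R S x - s)) (hPs : aeval s P = 0) :
    s ∈ Set.range (algebraMap R S) := by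
  obtain ⟨r, ⟨hxr, hPr⟩, -⟩ := existsUnique_nilpotent_sub_and_aeval_eq_zero hP hP'
  have hP_S : IsNilpotent (aeval (algebraMap R S x) P) := by
    rw [aeval_algebraMap_apply]; exact hP.map _
  have hP'_S : IsUnit (aeval (algebraMap R S x) (derivative P)) := by
    rw [aeval_algebraMap_apply]; exact hP'.map _
  refine ⟨r, (existsUnique_nilpotent_sub_and_aeval_eq_zero hP_S hP'_S).unique ?_ ⟨hs, hPs⟩⟩
  exact ⟨by simpa using hxr.map (algebraMap R S), by rw [aeval_algebraMap_apply, hPr, map_zero]⟩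

end Polynomial

variable {K : Type*} [CommRing K]

theorem mem_adjoin_pow_of_isNilpotent_sub_one_of_comm {A : Type*} [CommRing A] [Algebra K A]
    {g : A} (hg : IsNilpotent (g - 1)) {N : ℕ} (hN : IsUnit (N : K)) :
    g ∈ Algebra.adjoin K {g ^ N} := by
  set B := Algebra.adjoin K {g ^ N}
  set u : B := ⟨g ^ N, Algebra.self_mem_adjoin_singleton K _⟩
  have hu : IsNilpotent (1 - u) := by
    rw [← IsNilpotent.map_iff (f := B.val) Subtype.val_injective]
    simpa using (isNilpotent_aeval_sub_of_isNilpotent_sub (X ^ N : K[X]) hg).neg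
  have hNB : IsUnit (N : B) := by simpa using hN.map (algebraMap K B)
  obtain ⟨b, hb⟩ := mem_range_algebraMap_of_aeval_eq_zero (P := X ^ N - C u) (x := 1) (s := g)
    (by simpa using hu) (by simpa [derivative_X_pow] using hNB) (by simpa using hg.neg)
    (by simp [u])
  exact hb ▸ b.2

theorem mem_adjoin_pow_of_isNilpotent_sub_one {A : Type*} [Ring A] [Algebra K A]
    {g : A} (hg : IsNilpotent (g - 1)) {N : ℕ} (hN : IsUnit (N : K)) :
    g ∈ Algebra.adjoin K {g ^ N} := by
  set B := Algebra.adjoin K {g}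
  set g' : B := ⟨g, Algebra.self_mem_adjoin_singleton K g⟩
  have hg' : IsNilpotent (g' - 1) := by
    rwa [← IsNilpotent.map_iff (f := B.val) Subtype.val_injective]
  have hmap := (Subalgebra.mem_map (f := B.val)).mpr
    ⟨g', mem_adjoin_pow_of_isNilpotent_sub_one_of_comm hg' hN, rfl⟩
  rwa [AlgHom.map_adjoin, Set.image_singleton, map_pow] at hmap

theorem Submodule.smul_mem_of_mem_adjoin_singleton {R A M : Type*} [CommSemiring R] [Semiring A]
    [Algebra R A] [AddCommMonoid M] [Module R M] [Module A M] [IsScalarTower R A M]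
    {V : Submodule R M} {a b : A} (hV : ∀ v ∈ V, a • v ∈ V) (hb : b ∈ Algebra.adjoin R {a})
    {v : M} (hv : v ∈ V) :
    b • v ∈ V := by
  rw [Algebra.adjoin_singleton_eq_range_aeval] at hb
  obtain ⟨p, rfl⟩ := hb
  exact aeval_apply_smul_mem_of_le_comap' hv p a hV

theorem map_nsmul_of_map_add {M G : Type*} [AddMonoid M] [Group G] {f : M → G}
    (hf : ∀ a b, f (a + b) = f a * f b) (k : ℕ) (a : M) : f (k • a) = f a ^ k :=
  map_pow (MonoidHom.mk' (f ∘ Multiplicative.toAdd) fun a b => hf a.toAdd b.toAdd)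
    (Multiplicative.ofAdd a) k

/-- Let `α_uni : ℤ^d → GL_m(ℚ)` be a homomorphism whose image consists of unipotent
matrices.  If a ℚ-subspace `V ⊆ ℚ^m` is invariant under `α_uni(n)` for all `n` in a
finite-index subgroup `Λ ≤ ℤ^d`, then it is invariant under `α_uni(n)` for all
`n ∈ ℤ^d`. -/
theorem stmt_11 {m d : ℕ} (α : (Fin d → ℤ) → GL (Fin m) ℚ)
    (hhom : ∀ a b : Fin d → ℤ, α (a + b) = α a * α b)
    (huni : ∀ n : Fin d → ℤ, IsNilpotent ((α n : Matrix (Fin m) (Fin m) ℚ) - 1))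
    (Λ : AddSubgroup (Fin d → ℤ)) (hΛ : Λ.index ≠ 0)
    (V : Submodule ℚ (Fin m → ℚ))
    (hV : ∀ n ∈ Λ, ∀ x ∈ V, (α n : Matrix (Fin m) (Fin m) ℚ).mulVec x ∈ V) :
    ∀ n : Fin d → ℤ, ∀ x ∈ V, (α n : Matrix (Fin m) (Fin m) ℚ).mulVec x ∈ V := by
  intro n
  have hpow : (α n : Matrix (Fin m) (Fin m) ℚ) ^ Λ.index = α (Λ.index • n) := by
    rw [map_nsmul_of_map_add hhom, Units.val_pow_eq_pow_val]
  have hadj := mem_adjoin_pow_of_isNilpotent_sub_one (huni n) (N := Λ.index)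
    (K := ℚ) (Nat.cast_ne_zero.mpr hΛ).isUnit
  rw [hpow] at hadj
  exact fun x hx => Submodule.smul_mem_of_mem_adjoin_singleton
    (hV _ (Λ.nsmul_index_mem n)) hadj hx
end

section
/- Let h : Z^d → [0, ∞) be a function, let χ : Z^d → R be a nonzero linear functional, and suppose: (a) h(kn) = k·h(n) for all k ∈ N and n ∈ Z^d with χ·n < 0; (b) h(n) ≥ h(m) whenever χ·n < χ·m < 0; (c) h(n) = 0 whenever χ·n ≥ 0. Then there exists a constant c ≥ 0 such that h(n) = c·|χ·n| for all n ∈ Z^d with χ·n < 0. -/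
/-- Entropy-linearity lemma, abstract form.  Let `h : ℤ^d → [0, ∞)` and let `χ` be a
nonzero additive functional `ℤ^d → ℝ` such that (a) `h(kn) = k·h(n)` for `k ∈ ℕ` and
`χ·n < 0`; (b) `h` is monotone: `h(n) ≥ h(m)` whenever `χ·n < χ·m < 0`; and (c)
`h(n) = 0` whenever `χ·n ≥ 0`.  Then there is `c ≥ 0` with `h(n) = c·|χ·n|` for all
`n` with `χ·n < 0`. -/
theorem stmt_18 {d : ℕ} (h : (Fin d → ℤ) → ℝ) (hpos : ∀ n, 0 ≤ h n)
    (χ : (Fin d → ℤ) →+ ℝ) (hχ : χ ≠ 0)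
    (ha : ∀ (k : ℕ) (n : Fin d → ℤ), χ n < 0 → h (k • n) = (k : ℝ) * h n)
    (hb : ∀ n m : Fin d → ℤ, χ n < χ m → χ m < 0 → h m ≤ h n)
    (hc : ∀ n : Fin d → ℤ, 0 ≤ χ n → h n = 0) :
    ∃ c : ℝ, 0 ≤ c ∧ ∀ n : Fin d → ℤ, χ n < 0 → h n = c * |χ n| := by
  -- Key inequality
  have key : ∀ n m : Fin d → ℤ, χ n < 0 → χ m < 0 → h m * |χ n| ≤ h n * |χ m| := by
    intro n m hn hm
    by_contra hlt
    push_neg at hlt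
    have hmpos : 0 < h m := by
      by_contra hz
      push_neg at hz
      have : h m = 0 := le_antisymm hz (hpos m)
      rw [this, zero_mul] at hlt
      exact absurd hlt (not_lt.2 (mul_nonneg (hpos n) (abs_nonneg _)))
    have hχn : 0 < |χ n| := abs_pos.2 (ne_of_lt hn)
    have hχm : 0 < |χ m| := abs_pos.2 (ne_of_lt hm)
    have hdiv : h n / h m < |χ n| / |χ m| := (div_lt_div_iff₀ hmpos hχm).2 (by linarith)
    obtain ⟨q, hq1, hq2⟩ := exists_rat_btwn hdiv
    have hq0 : 0 < (q : ℝ) := lt_of_le_of_lt (div_nonneg (hpos n) (hpos m)) hq1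
    set k : ℕ := q.num.toNat
    set l : ℕ := q.den
    have hl0 : 0 < (l : ℝ) := by exact_mod_cast q.den_pos
    have hk0 : 0 < (k : ℝ) := by
      have h' : 0 < q.num := Rat.num_pos.2 (by exact_mod_cast hq0)
      have : 0 < k := by simp only [k]; omega
      exact_mod_cast this
    have hqkl : (q : ℝ) = (k : ℝ) / (l : ℝ) := by
      rw [Rat.cast_def]
      congr 1
      have h' : 0 < q.num := Rat.num_pos.2 (by exact_mod_cast hq0)
      exact_mod_cast (Int.toNat_of_nonneg h'.le).symm
    -- from q < |χn|/|χm| : k |χm| < l |χn|, i.e. χ(l•n) < χ(k•m)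
    have h1 : (k : ℝ) * |χ m| < (l : ℝ) * |χ n| := by
      rw [hqkl] at hq2
      have := (div_lt_div_iff₀ hl0 hχm).1 hq2
      linarith
    rw [abs_of_neg hn, abs_of_neg hm] at h1
    have h2 : (l : ℝ) * χ n < (k : ℝ) * χ m := by linarith
    have hkm : (k : ℝ) * χ m < 0 := mul_neg_of_pos_of_neg hk0 hm
    have hχln : χ (l • n) = (l : ℝ) * χ n := by rw [map_nsmul, nsmul_eq_mul]
    have hχkm : χ (k • m) = (k : ℝ) * χ m := by rw [map_nsmul, nsmul_eq_mul]
    have := hb (l • n) (k • m) (by rw [hχln, hχkm]; exact h2) (by rw [hχkm]; exact hkm)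
    rw [ha k m hm, ha l n hn] at this
    -- k * h m ≤ l * h n ⇒ q ≤ h n / h m : contradiction
    have : (q : ℝ) ≤ h n / h m := by
      rw [hqkl, div_le_div_iff₀ hl0 hmpos]
      linarith
    linarith
  obtain ⟨x, hx⟩ : ∃ x, χ x ≠ 0 := by
    by_contra hz
    push_neg at hz
    exact hχ (AddMonoidHom.ext fun x => by simp [hz x])
  obtain ⟨n₀, hn₀⟩ : ∃ n₀, χ n₀ < 0 := by
    rcases lt_or_gt_of_ne hx with h1 | h1
    · exact ⟨x, h1⟩
    · exact ⟨-x, by simpa using neg_neg_iff_pos.2 h1⟩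
  refine ⟨h n₀ / |χ n₀|, div_nonneg (hpos n₀) (abs_nonneg _), fun n hn => ?_⟩
  have hχn₀ : 0 < |χ n₀| := abs_pos.2 (ne_of_lt hn₀)
  have e1 := key n n₀ hn hn₀
  have e2 := key n₀ n hn₀ hn
  have : h n * |χ n₀| = h n₀ * |χ n| := le_antisymm e2 e1
  field_simp
  linarith
end
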